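/- For s ∈ (0, 1), define E(s) = min over θ ∈ [0, π] of e_s(θ), where e_s(θ) = −s·sin²θ − (1 − s)·cosθ. Then E(s) = −(1 − s) for s ∈ (0, 1/3], E(s) = −s − (1 − s)²/(4s) for s ∈ [1/3, 1), and E is differentiable at every point of (0, 1) (in particular at s = 1/3, where both one-sided derivatives equal 1); i.e. the ground-state energy of the p = 2 ferromagnetic p-spin model in the thermodynamic limit has a continuous first derivative, so the quantum phase transition is of second (not first) order. -/

import Mathlib

/-!
In the variable `x = cos θ`, which ranges over `[-1, 1]` as `θ` ranges over `[0, π]`, the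
energy is the quadratic `s x² - (1 - s) x - s`. For `s ≥ 1/3` its vertex `x = (1 - s) / (2s)`
lies in `[-1, 1]` and gives `-s - (1 - s)² / (4s)`; for `s ≤ 1/3` the minimum sits at the
endpoint `x = 1` and equals `-(1 - s)`. The two branches meet at `s = 1/3` with the same value
`-2/3` and the same slope `1`, so the ground-state energy is differentiable there.
-/

open Real Set Topology

noncomputable def spinEnergy (s θ : ℝ) : ℝ := -s * sin θ ^ 2 - (1 - s) * cos θ

def spinEnergyOfCos (s x : ℝ) : ℝ := s * x ^ 2 - (1 - s) * x - s

noncomputable def groundEnergy (s : ℝ) : ℝ := sInf (spinEnergy s '' Icc 0 π)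

theorem spinEnergy_eq_comp_cos (s : ℝ) : spinEnergy s = spinEnergyOfCos s ∘ cos := by
  funext θ
  simp only [spinEnergy, spinEnergyOfCos, Function.comp, sin_sq]
  ring

theorem image_spinEnergy_Icc (s : ℝ) :
    spinEnergy s '' Icc 0 π = spinEnergyOfCos s '' Icc (-1) 1 := by
  rw [spinEnergy_eq_comp_cos, image_comp, surjOn_cos.image_eq_of_mapsTo (mapsTo_cos _)]

theorem isLeast_spinEnergyOfCos_of_le_third {s : ℝ} (hs : s ≤ 1 / 3) :
    IsLeast (spinEnergyOfCos s '' Icc (-1) 1) (-(1 - s)) := by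
  refine ⟨⟨1, right_mem_Icc.2 (by norm_num), by simp only [spinEnergyOfCos]; ring⟩, ?_⟩
  rintro _ ⟨x, ⟨hx₁, hx₂⟩, rfl⟩
  -- `spinEnergyOfCos s x + (1 - s) = (1 - x) (1 - 2s - s x)`, a product of nonnegative factors.
  have hfactor : 0 ≤ 1 - 2 * s - s * x := by nlinarith
  simp only [spinEnergyOfCos]
  nlinarith [mul_nonneg (sub_nonneg.2 hx₂) hfactor]

theorem isLeast_spinEnergyOfCos_of_third_le {s : ℝ} (hs : 1 / 3 ≤ s) :
    IsLeast (spinEnergyOfCos s '' Icc (-1) 1) (-s - (1 - s) ^ 2 / (4 * s)) := by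
  have hs₀ : 0 < s := by linarith
  have hvertex : (1 - s) / (2 * s) ∈ Icc (-1 : ℝ) 1 := by
    constructor
    · rw [le_div_iff₀ (by positivity)]; linarith
    · rw [div_le_one (by positivity)]; linarith
  refine ⟨⟨_, hvertex, ?_⟩, ?_⟩
  · simp only [spinEnergyOfCos]
    field_simp
    ring
  · rintro _ ⟨x, -, rfl⟩
    have hsquare : spinEnergyOfCos s x - (-s - (1 - s) ^ 2 / (4 * s))
        = (2 * s * x - (1 - s)) ^ 2 / (4 * s) := by
      simp only [spinEnergyOfCos]
      field_simp
      ring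
    have hsquare_nonneg : 0 ≤ (2 * s * x - (1 - s)) ^ 2 / (4 * s) := by positivity
    linarith

theorem groundEnergy_of_le_third {s : ℝ} (hs : s ≤ 1 / 3) : groundEnergy s = -(1 - s) := by
  rw [groundEnergy, image_spinEnergy_Icc, (isLeast_spinEnergyOfCos_of_le_third hs).csInf_eq]

theorem groundEnergy_of_third_le {s : ℝ} (hs : 1 / 3 ≤ s) :
    groundEnergy s = -s - (1 - s) ^ 2 / (4 * s) := by
  rw [groundEnergy, image_spinEnergy_Icc, (isLeast_spinEnergyOfCos_of_third_le hs).csInf_eq]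

theorem hasDerivAt_neg_sub_sq_div {s : ℝ} (hs : s ≠ 0) :
    HasDerivAt (fun t : ℝ => -t - (1 - t) ^ 2 / (4 * t)) (1 / (4 * s ^ 2) - 5 / 4) s := by
  have hnum : HasDerivAt (fun t : ℝ => (1 - t) ^ 2) (-(2 * (1 - s))) s := by
    simpa using ((hasDerivAt_id' s).const_sub 1).fun_pow 2
  have hden : HasDerivAt (fun t : ℝ => 4 * t) 4 s := by
    simpa using (hasDerivAt_id s).const_mul (4 : ℝ)
  refine ((hasDerivAt_id' s).fun_neg.fun_sub (hnum.fun_div hden (by positivity))).congr_deriv ?_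
  field_simp
  ring

theorem hasDerivAt_groundEnergy_third : HasDerivAt groundEnergy 1 (1 / 3) := by
  have hbranch : HasDerivAt (fun t : ℝ => -(1 - t)) 1 (1 / 3) := by
    simpa using ((hasDerivAt_id' (1 / 3 : ℝ)).const_sub 1).fun_neg
  have hleft : HasDerivWithinAt groundEnergy 1 (Iic (1 / 3)) (1 / 3) :=
    hbranch.hasDerivWithinAt.congr (fun _ ↦ groundEnergy_of_le_third)
      (groundEnergy_of_le_third le_rfl)
  have hright : HasDerivWithinAt groundEnergy 1 (Ici (1 / 3)) (1 / 3) :=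
    ((hasDerivAt_neg_sub_sq_div (by norm_num)).hasDerivWithinAt.congr
      (fun _ ↦ groundEnergy_of_third_le) (groundEnergy_of_third_le le_rfl)).congr_deriv
      (by norm_num)
  simpa [Iic_union_Ici] using hleft.union hright

theorem differentiable_groundEnergy : Differentiable ℝ groundEnergy := by
  intro s
  rcases lt_trichotomy s (1 / 3) with hs | rfl | hs
  · have heq : groundEnergy =ᶠ[𝓝 s] fun t ↦ -(1 - t) := by
      filter_upwards [Iio_mem_nhds hs] with t ht using groundEnergy_of_le_third ht.le
    exact heq.differentiableAt_iff.2 (by fun_prop)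
  · exact hasDerivAt_groundEnergy_third.differentiableAt
  · have heq : groundEnergy =ᶠ[𝓝 s] fun t ↦ -t - (1 - t) ^ 2 / (4 * t) := by
      filter_upwards [Ioi_mem_nhds hs] with t ht using groundEnergy_of_third_le ht.le
    exact heq.differentiableAt_iff.2
      (hasDerivAt_neg_sub_sq_div (by positivity)).differentiableAt

/-- Let E(s) = min_{θ ∈ [0,π]} (−s·sin²θ − (1−s)·cosθ). Then
E(s) = −(1−s) on (0, 1/3], E(s) = −s − (1−s)²/(4s) on [1/3, 1), E is differentiable
on (0,1), and at s = 1/3 both one-sided derivatives equal 1: the p = 2 ground-state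
energy has continuous first derivative (second order QPT). -/
theorem p2_spin_second_order_QPT (E : ℝ → ℝ)
    (hE : ∀ s : ℝ, E s =
      sInf ((fun θ : ℝ => -s * Real.sin θ ^ 2 - (1 - s) * Real.cos θ) ''
        Set.Icc 0 Real.pi)) :
    (∀ s ∈ Set.Ioc (0 : ℝ) (1 / 3), E s = -(1 - s)) ∧
    (∀ s ∈ Set.Ico (1 / 3 : ℝ) 1, E s = -s - (1 - s) ^ 2 / (4 * s)) ∧
    (∀ s ∈ Set.Ioo (0 : ℝ) 1, DifferentiableAt ℝ E s) ∧
    HasDerivWithinAt E 1 (Set.Iic (1 / 3)) (1 / 3) ∧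
    HasDerivWithinAt E 1 (Set.Ici (1 / 3)) (1 / 3) := by
  obtain rfl : E = groundEnergy := funext hE
  exact ⟨fun s hs ↦ groundEnergy_of_le_third hs.2,
    fun s hs ↦ groundEnergy_of_third_le hs.1,
    fun s _ ↦ differentiable_groundEnergy s,
    hasDerivAt_groundEnergy_third.hasDerivWithinAt,
    hasDerivAt_groundEnergy_third.hasDerivWithinAt⟩
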